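/- Let Q be a quiver with one-dimensional vertices containing a connected pair (v₁, v₂) with arrows a₁ : v₁ → v₂ and a₂ : v₂ → v₁, and suppose there are exactly two directed paths from v₁ to v₂ and exactly two from v₂ to v₁; write Γ₁ for the extra path from v₁ to v₂ and Γ₂ for the extra path from v₂ to v₁, and assume Γ₁ and Γ₂ are internally vertex-disjoint. Then the only primitive cycles of Q passing through both v₁ and v₂ are: p = (a₁, a₂), q₁ = (a₁, Γ₂), q₂ = (Γ₁, a₂), and s = (Γ₁, Γ₂); and for the multiset U_q consisting of all arrows of q₁ and q₂, the only partitions of U_q into primitive cycles are {q₁, q₂} and {p, s}. -/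

import Mathlib

/-- A quiver (finite directed multigraph): a finite set of vertices `V`,
a finite set of arrows `A`, and source/target maps `s`, `t`. -/
structure Quiv where
  V : Type
  A : Type
  [fintV : Fintype V]
  [fintA : Fintype A]
  [decV : DecidableEq V]
  [decA : DecidableEq A]
  s : A → V
  t : A → V

attribute [instance] Quiv.fintV Quiv.fintA Quiv.decV Quiv.decA

namespace Quiv

variable (Q : Quiv)

/-- Cyclic access to the entries of a nonempty list. -/
def cyc (l : List Q.A) (hl : l ≠ []) (i : ℕ) : Q.A :=
  l.get ⟨i % l.length, Nat.mod_lt _ (List.length_pos_iff.mpr hl)⟩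

/-- `l` is a (nonempty) directed cycle: consecutive arrows compose, cyclically. -/
def IsCycleList (l : List Q.A) : Prop :=
  ∃ hl : l ≠ [], ∀ i : ℕ, Q.t (Q.cyc l hl i) = Q.s (Q.cyc l hl (i + 1))

/-- A primitive (simple) cycle: a directed cycle visiting no vertex more than once. -/
def IsPrimCycle (l : List Q.A) : Prop :=
  Q.IsCycleList l ∧ (l.map Q.s).Nodup

/-- The set of primitive cycles of `Q`, each recorded by its (finite) set of arrows.
A primitive cycle is determined, up to rotation, by its set of arrows. -/
def primCycles : Set (Finset Q.A) :=
  { S | ∃ l : List Q.A, Q.IsPrimCycle l ∧ l.toFinset = S }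

/-- The number of primitive cycles of `Q`. -/
noncomputable def numPrimCycles : ℕ := Q.primCycles.ncard

/-- One-step reachability. -/
def Step (u v : Q.V) : Prop := ∃ a : Q.A, Q.s a = u ∧ Q.t a = v

/-- `Q` is strongly connected: every vertex is reachable from every other
by a directed path. -/
def StronglyConnected : Prop := ∀ u v : Q.V, Relation.ReflTransGen Q.Step u v

/-- `Q` has no loops. -/
def NoLoops : Prop := ∀ a : Q.A, Q.s a ≠ Q.t a

/-- In-degree of a vertex (arrows counted with multiplicity). -/
def inDeg (v : Q.V) : ℕ := (Finset.univ.filter fun a => Q.t a = v).card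

/-- Out-degree of a vertex (arrows counted with multiplicity). -/
def outDeg (v : Q.V) : ℕ := (Finset.univ.filter fun a => Q.s a = v).card

/-- `F(Q) = |C| + |V| - |A| - 1`, the codimension of the associated toric variety. -/
noncomputable def F : ℤ :=
  (Q.numPrimCycles : ℤ) + (Fintype.card Q.V : ℤ) - (Fintype.card Q.A : ℤ) - 1


/-- A multiset of arrows is Eulerian if at every vertex the number of arrows of `U`
entering the vertex (with multiplicity) equals the number leaving it. -/
def Eulerian (U : Multiset Q.A) : Prop :=
  ∀ v : Q.V, (U.filter fun a => Q.t a = v).card = (U.filter fun a => Q.s a = v).card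

/-- `P` is a partition of the arrow multiset `U` into primitive cycles: a multiset of
arrow sets of primitive cycles whose multiset sum is `U`. -/
def IsCyclePartition (U : Multiset Q.A) (P : Multiset (Finset Q.A)) : Prop :=
  (∀ c ∈ P, c ∈ Q.primCycles) ∧ (P.map Finset.val).sum = U

/-- The set of vertices met by a set of arrows. -/
def verts (S : Finset Q.A) : Finset Q.V := S.image Q.s ∪ S.image Q.t

/-- The list of vertices visited by a list of arrows (for a composable list:
the source of the first arrow followed by the targets of all arrows). -/
def pathVerts (p : List Q.A) : List Q.V :=
  match p with
  | [] => []
  | a :: _ => Q.s a :: p.map Q.t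

/-- `p` is a simple directed path: consecutive arrows compose and it visits no
vertex twice. -/
def IsDirPath (p : List Q.A) : Prop :=
  p.Chain' (fun a b => Q.t a = Q.s b) ∧ (Q.pathVerts p).Nodup

/-- `p` is a (nonempty) simple directed path from `u` to `w`. -/
def IsPathFromTo (p : List Q.A) (u w : Q.V) : Prop :=
  Q.IsDirPath p ∧ p ≠ [] ∧ (Q.pathVerts p).head? = some u ∧ (Q.pathVerts p).getLast? = some w

end Quiv

/-!
Cutting a primitive cycle through `v₁` and `v₂` at these two vertices leaves a path `v₁ ⟶ v₂`
followed by a path `v₂ ⟶ v₁`; there are two of each, whence the four cycles `p, q₁, q₂, s`.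

A primitive cycle built from arrows of `U_q` passes through `v₁` and `v₂`: if it avoids `a₁` and
`a₂`, its arrows lie on the primitive cycle `s = Γ₁Γ₂`, whose arrows leave pairwise distinct
vertices, so it is `s` itself. Hence a partition of `U_q` consists of copies of `p, q₁, q₂, s`.
As `U_q` contains `a₁` exactly once, the member containing `a₁` is `p` or `q₁`, and everything
else must then be `s`, resp. `q₂`.
-/

lemma Multiset.eq_pair_of_sum_map_val_eq {α : Type*} {P : Multiset (Finset α)} {c c' : Finset α}
    (hc : c ∈ P) (hc' : c'.Nonempty) (hsum : (P.map Finset.val).sum = c.val + c'.val)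
    (hrest : ∀ d ∈ P, d ⊆ c' → d = c') : P = {c, c'} := by
  obtain ⟨R, rfl⟩ := Multiset.exists_cons_of_mem hc
  have hR : (R.map Finset.val).sum = c'.val := by simpa using hsum
  have hrep : R = Multiset.replicate (Multiset.card R) c' := by
    refine Multiset.eq_replicate_card.mpr fun d hd => hrest d (Multiset.mem_cons_of_mem hd) ?_
    rw [← Finset.val_le_iff, ← hR]
    exact Multiset.le_sum_of_mem (Multiset.mem_map_of_mem _ hd)
  have hcard : Multiset.card R * c'.card = 1 * c'.card := by
    rw [hrep] at hR
    simpa using congrArg Multiset.card hR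
  rw [hrep, Nat.eq_of_mul_eq_mul_right hc'.card_pos hcard]
  rfl

lemma Multiset.eq_or_eq_of_sum_map_val_eq {α : Type*} [DecidableEq α] {a₁ a₂ : α} {Γ₁ Γ₂ : List α}
    (hnd : (a₁ :: a₂ :: (Γ₁ ++ Γ₂)).Nodup) (hΓ₂ : Γ₂ ≠ []) {P : Multiset (Finset α)}
    (hP : ∀ d ∈ P, d = {a₁, a₂} ∨ d = insert a₁ Γ₂.toFinset ∨ d = insert a₂ Γ₁.toFinset ∨
      d = Γ₁.toFinset ∪ Γ₂.toFinset)
    (hsum : (P.map Finset.val).sum = (a₁ ::ₘ ↑Γ₂) + (a₂ ::ₘ ↑Γ₁)) :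
    P = {insert a₁ Γ₂.toFinset, insert a₂ Γ₁.toFinset} ∨
      P = {{a₁, a₂}, Γ₁.toFinset ∪ Γ₂.toFinset} := by
  have hval : ∀ l : List α, l.Nodup → l.toFinset.val = l := fun l h => by
    rw [List.toFinset_val, h.dedup]
  simp only [List.nodup_cons, List.mem_cons, List.mem_append, not_or, List.nodup_append] at hnd
  obtain ⟨⟨h12, h1Γ₁, h1Γ₂⟩, ⟨h2Γ₁, h2Γ₂⟩, hΓ₁nd, hΓ₂nd, hΓ⟩ := hnd
  obtain ⟨g, hg⟩ := List.exists_mem_of_ne_nil _ hΓ₂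
  have hgΓ₁ : g ∉ Γ₁ := fun h => hΓ g h g hg rfl
  have hq₁ : (insert a₁ Γ₂.toFinset).val = a₁ ::ₘ ↑Γ₂ := by
    rw [← List.toFinset_cons, hval _ (List.nodup_cons.mpr ⟨h1Γ₂, hΓ₂nd⟩), Multiset.cons_coe]
  have hq₂ : (insert a₂ Γ₁.toFinset).val = a₂ ::ₘ ↑Γ₁ := by
    rw [← List.toFinset_cons, hval _ (List.nodup_cons.mpr ⟨h2Γ₁, hΓ₁nd⟩), Multiset.cons_coe]
  have hp : ({a₁, a₂} : Finset α).val = a₁ ::ₘ {a₂} :=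
    Finset.insert_val_of_notMem (by simpa using h12)
  have hs : (Γ₁.toFinset ∪ Γ₂.toFinset).val = ↑Γ₁ + ↑Γ₂ := by
    rw [← List.toFinset_append, hval _ (List.nodup_append.mpr ⟨hΓ₁nd, hΓ₂nd, hΓ⟩), Multiset.coe_add]
  have ha₁ : a₁ ∈ (P.map Finset.val).sum := by simp [hsum]
  obtain ⟨_, hm, ha₁c⟩ := Multiset.mem_join.mp ha₁
  obtain ⟨c, hc, rfl⟩ := Multiset.mem_map.mp hm
  rcases hP c hc with rfl | rfl | rfl | rfl
  · refine Or.inr (Multiset.eq_pair_of_sum_map_val_eq hc (by simp [hΓ₂]) ?_ fun d hd hds => ?_)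
    · rw [hsum, hp, hs]
      simp only [← Multiset.singleton_add]
      abel
    · rcases hP d hd with rfl | rfl | rfl | rfl <;> simp_all [Finset.insert_subset_iff]
  · refine Or.inl (Multiset.eq_pair_of_sum_map_val_eq hc (by simp) (by rw [hsum, hq₁, hq₂])
      fun d hd hds => ?_)
    rcases hP d hd with rfl | rfl | rfl | rfl
    · simp_all [Finset.insert_subset_iff]
    · simp_all [Finset.insert_subset_iff]
    · rfl
    · have := hds (by simp [hg] : g ∈ Γ₁.toFinset ∪ Γ₂.toFinset)
      simp_all
  · simp_all
  · simp_all

namespace Quiv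

variable {Q : Quiv}

/-- The vertices visited by `p`, read once off the targets and once off the sources, agree; in
particular `p` starts at `u` and ends at `w` (and `u = w` if `p = []`). -/
def IsWalk (p : List Q.A) (u w : Q.V) : Prop :=
  u :: p.map Q.t = p.map Q.s ++ [w]

lemma IsWalk.src_head {a : Q.A} {r : List Q.A} {u w : Q.V} (h : Q.IsWalk (a :: r) u w) :
    Q.s a = u := by
  simp only [IsWalk, List.map_cons, List.cons_append, List.cons.injEq] at h
  exact h.1.symm

lemma IsWalk.append {p q : List Q.A} {u v w : Q.V} (hp : Q.IsWalk p u v) (hq : Q.IsWalk q v w) :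
    Q.IsWalk (p ++ q) u w := by
  unfold IsWalk at *
  rw [List.map_append, List.map_append, ← List.cons_append, hp, List.append_assoc,
    List.singleton_append, hq, List.append_assoc]

lemma isWalk_append_cons {p q : List Q.A} {c : Q.A} {u w : Q.V} :
    Q.IsWalk (p ++ c :: q) u w ↔ Q.IsWalk p u (Q.s c) ∧ Q.IsWalk (c :: q) (Q.s c) w := by
  refine ⟨fun h => ?_, fun h => h.1.append h.2⟩
  unfold IsWalk at *
  have h' : (u :: p.map Q.t) ++ (c :: q).map Q.t =
      (p.map Q.s ++ [Q.s c]) ++ (q.map Q.s ++ [w]) := by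
    simpa using h
  obtain ⟨h₁, h₂⟩ := List.append_inj h' (by simp)
  exact ⟨h₁, by simp [h₂]⟩

lemma isChain_iff_exists_isWalk {a : Q.A} {r : List Q.A} :
    (a :: r).IsChain (fun b c => Q.t b = Q.s c) ↔ ∃ w, Q.IsWalk (a :: r) (Q.s a) w := by
  induction r generalizing a with
  | nil => simp [IsWalk]
  | cons b r ih =>
    rw [List.isChain_cons_cons, ih, ← List.singleton_append]
    simp [IsWalk]

lemma IsWalk.pathVerts_eq {p : List Q.A} {u w : Q.V} (h : Q.IsWalk p u w) (hp : p ≠ []) :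
    Q.pathVerts p = p.map Q.s ++ [w] := by
  obtain ⟨a, r, rfl⟩ := List.exists_cons_of_ne_nil hp
  rw [← h, ← h.src_head]
  rfl

lemma isPathFromTo_iff {p : List Q.A} {u w : Q.V} :
    Q.IsPathFromTo p u w ↔ p ≠ [] ∧ Q.IsWalk p u w ∧ (p.map Q.s ++ [w]).Nodup := by
  constructor
  · rintro ⟨⟨hchain, hnd⟩, hp, hhead, hlast⟩
    obtain ⟨a, r, rfl⟩ := List.exists_cons_of_ne_nil hp
    obtain ⟨w', hw'⟩ := isChain_iff_exists_isWalk.mp hchain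
    rw [hw'.pathVerts_eq hp] at hnd hhead hlast
    simp only [List.getLast?_append, List.getLast?_singleton, Option.some_or, Option.some.injEq]
      at hlast
    simp only [List.map_cons, List.cons_append, List.head?_cons, Option.some.injEq] at hhead
    subst hhead hlast
    exact ⟨hp, hw', hnd⟩
  · rintro ⟨hp, hw, hnd⟩
    obtain ⟨a, r, rfl⟩ := List.exists_cons_of_ne_nil hp
    have hpv := hw.pathVerts_eq hp
    refine ⟨⟨isChain_iff_exists_isWalk.mpr ⟨w, hw.src_head ▸ hw⟩, hpv ▸ hnd⟩, hp, ?_, ?_⟩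
    · simp [pathVerts, hw.src_head]
    · rw [hpv, List.getLast?_concat]

namespace IsPathFromTo

variable {p : List Q.A} {u w : Q.V} (hp : Q.IsPathFromTo p u w)
include hp

lemma ne_nil : p ≠ [] := (isPathFromTo_iff.mp hp).1

lemma isWalk : Q.IsWalk p u w := (isPathFromTo_iff.mp hp).2.1

lemma nodup_map_src_append : (p.map Q.s ++ [w]).Nodup := (isPathFromTo_iff.mp hp).2.2

lemma pathVerts_eq : Q.pathVerts p = p.map Q.s ++ [w] := hp.isWalk.pathVerts_eq hp.ne_nil

lemma src_ne_of_mem {b : Q.A} (hb : b ∈ p) : Q.s b ≠ w := by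
  have := (List.nodup_append.mp hp.nodup_map_src_append).2.2
  simp only [List.mem_map, List.mem_singleton] at this
  exact this _ ⟨b, hb, rfl⟩ _ rfl

lemma eq_singleton_of_mem {b : Q.A} (hb : b ∈ p) (hbu : Q.s b = u) (hbw : Q.t b = w) :
    p = [b] := by
  obtain ⟨a, r, rfl⟩ := List.exists_cons_of_ne_nil hp.ne_nil
  have hab : a = b := List.inj_on_of_nodup_map (List.nodup_append.mp hp.nodup_map_src_append).1
    List.mem_cons_self hb (hp.isWalk.src_head.trans hbu.symm)
  subst hab
  cases r with
  | nil => rfl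
  | cons c r =>
    have hw := hp.isWalk
    simp only [IsWalk, List.map_cons, List.cons_append, List.cons.injEq] at hw
    exact absurd (hbw ▸ hw.2.1).symm (hp.src_ne_of_mem (List.mem_cons_of_mem _ List.mem_cons_self))

end IsPathFromTo

lemma isCycleList_iff_map_tgt_eq_rotate {l : List Q.A} :
    Q.IsCycleList l ↔ l ≠ [] ∧ l.map Q.t = (l.map Q.s).rotate 1 := by
  refine ⟨fun ⟨hl, h⟩ => ⟨hl, List.ext_getElem (by simp) fun i h₁ _ => ?_⟩,
    fun ⟨hl, h⟩ => ⟨hl, fun i => ?_⟩⟩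
  · have hi : i < l.length := by simpa using h₁
    simpa [cyc, List.getElem_rotate, Nat.mod_eq_of_lt hi] using h i
  · have hi : i % l.length < l.length := Nat.mod_lt _ (List.length_pos_iff.mpr hl)
    have := congrArg (·[i % l.length]?) h
    simpa [cyc, List.getElem?_rotate, hi, Nat.mod_add_mod] using this

lemma isCycleList_iff_exists_isWalk {l : List Q.A} :
    Q.IsCycleList l ↔ l ≠ [] ∧ ∃ u, Q.IsWalk l u u := by
  rw [isCycleList_iff_map_tgt_eq_rotate]
  cases l with
  | nil => simp
  | cons a r =>
    refine ⟨fun ⟨_, h⟩ => ⟨List.cons_ne_nil a r, Q.s a, ?_⟩,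
      fun ⟨_, u, h⟩ => ⟨List.cons_ne_nil a r, ?_⟩⟩
    · simpa [IsWalk, List.rotate_cons_succ] using h
    · have := h.src_head
      subst this
      simpa [IsWalk, List.rotate_cons_succ] using h

lemma IsCycleList.tgt_mem_map_src {l : List Q.A} (h : Q.IsCycleList l) {b : Q.A} (hb : b ∈ l) :
    Q.t b ∈ l.map Q.s := by
  rw [← List.mem_rotate (n := 1), ← (isCycleList_iff_map_tgt_eq_rotate.mp h).2]
  exact List.mem_map_of_mem hb

lemma IsPrimCycle.exists_split {l : List Q.A} (h : Q.IsPrimCycle l) {x y : Q.V} (hxy : x ≠ y)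
    (hx : x ∈ l.map Q.s) (hy : y ∈ l.map Q.s) :
    ∃ p q, Q.IsPathFromTo p x y ∧ Q.IsPathFromTo q y x ∧ l ~r p ++ q := by
  obtain ⟨⟨_, u, hwalk⟩, hnd⟩ := And.imp_left isCycleList_iff_exists_isWalk.mp h
  obtain ⟨b, hb, rfl⟩ := List.mem_map.mp hx
  obtain ⟨l₁, l₂, rfl⟩ := List.append_of_mem hb
  have hrot : l₁ ++ b :: l₂ ~r b :: (l₂ ++ l₁) := List.isRotated_append
  obtain ⟨c, hc, rfl⟩ : ∃ c ∈ l₂ ++ l₁, Q.s c = y := by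
    rw [← List.mem_map]
    simpa [or_comm, hxy.symm] using hy
  obtain ⟨m₁, m₂, hm⟩ := List.append_of_mem hc
  rw [hm, ← List.cons_append] at hrot
  have hwalk' : Q.IsWalk ((b :: m₁) ++ c :: m₂) (Q.s b) (Q.s b) := by
    obtain ⟨h₁, h₂⟩ := isWalk_append_cons.mp hwalk
    simpa [hm] using h₂.append h₁
  obtain ⟨hw₁, hw₂⟩ := isWalk_append_cons.mp hwalk'
  have hnd' : ((b :: m₁).map Q.s ++ (c :: m₂).map Q.s).Nodup := by
    rw [← List.map_append]
    exact (hrot.perm.map Q.s).nodup_iff.mp hnd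
  have hsub : ∀ (l l' : List Q.A) (d : Q.A),
      (l.map Q.s ++ [Q.s d]).Sublist (l.map Q.s ++ (d :: l').map Q.s) :=
    fun l l' d => ((List.nil_sublist _).cons_cons _).append_left _
  refine ⟨b :: m₁, c :: m₂, isPathFromTo_iff.mpr ⟨List.cons_ne_nil _ _, hw₁, ?_⟩,
    isPathFromTo_iff.mpr ⟨List.cons_ne_nil _ _, hw₂, ?_⟩, hrot⟩
  · exact (hsub _ _ _).nodup hnd'
  · exact (hsub _ _ _).nodup (List.nodup_append_comm.mp hnd')

lemma IsCycleList.tgt_getElem {l : List Q.A} (h : Q.IsCycleList l) {i : ℕ} (hi : i < l.length) :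
    Q.t l[i] = Q.s (l[(i + 1) % l.length]'(Nat.mod_lt _ (by omega))) := by
  have := congrArg (·[i]?) (isCycleList_iff_map_tgt_eq_rotate.mp h).2
  simpa [List.getElem?_rotate, hi] using this

/-- The arrows of a primitive cycle leave distinct vertices, so each of them has a unique successor
among them; a cycle made of such arrows therefore runs all the way round. -/
lemma IsPrimCycle.subset_of_isCycleList_of_subset {C l : List Q.A} (hC : Q.IsPrimCycle C)
    (hl : Q.IsCycleList l) (hsub : l ⊆ C) : C ⊆ l := by
  obtain ⟨b₀, hb₀⟩ := List.exists_mem_of_ne_nil l hl.1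
  obtain ⟨i₀, hi₀, rfl⟩ := List.getElem_of_mem (hsub hb₀)
  have hn : 0 < C.length := by omega
  have hround : ∀ k, C[(i₀ + k) % C.length]'(Nat.mod_lt _ hn) ∈ l := by
    intro k
    induction k with
    | zero => simpa [Nat.mod_eq_of_lt hi₀] using hb₀
    | succ k ih =>
      obtain ⟨b, hb, hbt⟩ := List.mem_map.mp (hl.tgt_mem_map_src ih)
      rw [hC.1.tgt_getElem] at hbt
      simp only [Nat.mod_add_mod] at hbt
      rwa [← add_assoc, ← List.inj_on_of_nodup_map hC.2 (hsub hb) (List.getElem_mem _) hbt]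
  intro c hc
  obtain ⟨j, hj, rfl⟩ := List.getElem_of_mem hc
  have hk : (i₀ + (j + C.length - i₀)) % C.length = j := by
    rw [show i₀ + (j + C.length - i₀) = j + C.length by omega, Nat.add_mod_right,
      Nat.mod_eq_of_lt hj]
  simpa only [hk] using hround (j + C.length - i₀)

lemma isPrimCycle_append {p q : List Q.A} {u w : Q.V} (hp : Q.IsPathFromTo p u w)
    (hq : Q.IsPathFromTo q w u)
    (hdisj : ∀ v, v ∈ Q.pathVerts p → v ∈ Q.pathVerts q → v = u ∨ v = w) :
    Q.IsPrimCycle (p ++ q) := by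
  refine ⟨isCycleList_iff_exists_isWalk.mpr
    ⟨by simp [hp.ne_nil], u, hp.isWalk.append hq.isWalk⟩, ?_⟩
  rw [List.map_append, List.nodup_append]
  refine ⟨(List.nodup_append.mp hp.nodup_map_src_append).1,
    (List.nodup_append.mp hq.nodup_map_src_append).1, ?_⟩
  rintro _ hv v hv' rfl
  obtain ⟨b, hb, rfl⟩ := List.mem_map.mp hv
  obtain ⟨b', hb', hbb'⟩ := List.mem_map.mp hv'
  have hvp : Q.s b ∈ Q.pathVerts p := by simp [hp.pathVerts_eq, List.mem_map_of_mem hb]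
  have hvq : Q.s b ∈ Q.pathVerts q := by simp [hq.pathVerts_eq, ← hbb', List.mem_map_of_mem hb']
  rcases hdisj _ hvp hvq with h | h
  · exact hq.src_ne_of_mem hb' (hbb'.trans h)
  · exact hp.src_ne_of_mem hb h

lemma src_mem_verts {S : Finset Q.A} {b : Q.A} (hb : b ∈ S) : Q.s b ∈ Q.verts S :=
  Finset.mem_union_left _ (Finset.mem_image_of_mem _ hb)

lemma tgt_mem_verts {S : Finset Q.A} {b : Q.A} (hb : b ∈ S) : Q.t b ∈ Q.verts S :=
  Finset.mem_union_right _ (Finset.mem_image_of_mem _ hb)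

lemma IsCycleList.mem_map_src_of_mem_verts {l : List Q.A} (hl : Q.IsCycleList l) {v : Q.V}
    (hv : v ∈ Q.verts l.toFinset) : v ∈ l.map Q.s := by
  simp only [verts, Finset.mem_union, Finset.mem_image, List.mem_toFinset] at hv
  rcases hv with ⟨b, hb, rfl⟩ | ⟨b, hb, rfl⟩
  · exact List.mem_map_of_mem hb
  · exact hl.tgt_mem_map_src hb

lemma eq_of_mem_primCycles_of_mem_verts {v₁ v₂ : Q.V} (hne : v₁ ≠ v₂) {a₁ a₂ : Q.A}
    {Γ₁ Γ₂ : List Q.A}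
    (honly₁ : ∀ p : List Q.A, Q.IsPathFromTo p v₁ v₂ → p = [a₁] ∨ p = Γ₁)
    (honly₂ : ∀ p : List Q.A, Q.IsPathFromTo p v₂ v₁ → p = [a₂] ∨ p = Γ₂)
    {S : Finset Q.A} (hS : S ∈ Q.primCycles) (h₁ : v₁ ∈ Q.verts S) (h₂ : v₂ ∈ Q.verts S) :
    S = {a₁, a₂} ∨ S = insert a₁ Γ₂.toFinset ∨ S = insert a₂ Γ₁.toFinset ∨
      S = Γ₁.toFinset ∪ Γ₂.toFinset := by
  obtain ⟨l, hl, rfl⟩ := hS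
  obtain ⟨p, q, hp, hq, hrot⟩ := hl.exists_split hne (hl.1.mem_map_src_of_mem_verts h₁)
    (hl.1.mem_map_src_of_mem_verts h₂)
  rw [List.toFinset_eq_of_perm _ _ hrot.perm, List.toFinset_append]
  rcases honly₁ p hp with rfl | rfl <;> rcases honly₂ q hq with rfl | rfl
  · simp
  · simp
  · simp [Finset.union_comm]
  · simp

lemma mem_verts_of_mem_primCycles_of_subset {v₁ v₂ : Q.V} {a₁ a₂ : Q.A}
    (ha₁ : Q.s a₁ = v₁ ∧ Q.t a₁ = v₂) (ha₂ : Q.s a₂ = v₂ ∧ Q.t a₂ = v₁) {Γ₁ Γ₂ : List Q.A}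
    (hΓ₁ : Q.IsPathFromTo Γ₁ v₁ v₂) (hΓ₂ : Q.IsPathFromTo Γ₂ v₂ v₁)
    (hΓ : Q.IsPrimCycle (Γ₁ ++ Γ₂)) {S : Finset Q.A} (hS : S ∈ Q.primCycles)
    (hsub : S ⊆ insert a₁ (insert a₂ (Γ₁ ++ Γ₂).toFinset)) :
    v₁ ∈ Q.verts S ∧ v₂ ∈ Q.verts S := by
  by_cases h₁ : a₁ ∈ S
  · exact ⟨ha₁.1 ▸ src_mem_verts h₁, ha₁.2 ▸ tgt_mem_verts h₁⟩
  by_cases h₂ : a₂ ∈ S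
  · exact ⟨ha₂.2 ▸ tgt_mem_verts h₂, ha₂.1 ▸ src_mem_verts h₂⟩
  obtain ⟨l, hl, rfl⟩ := hS
  rw [List.mem_toFinset] at h₁ h₂
  have hlΓ : l ⊆ Γ₁ ++ Γ₂ := fun b hb => by
    have := hsub (List.mem_toFinset.mpr hb)
    simp only [Finset.mem_insert, List.mem_toFinset] at this
    rcases this with rfl | rfl | h
    exacts [absurd hb h₁, absurd hb h₂, h]
  have hΓl := hΓ.subset_of_isCycleList_of_subset hl.1 hlΓ
  obtain ⟨c₁, r₁, rfl⟩ := List.exists_cons_of_ne_nil hΓ₁.ne_nil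
  obtain ⟨c₂, r₂, rfl⟩ := List.exists_cons_of_ne_nil hΓ₂.ne_nil
  exact ⟨hΓ₁.isWalk.src_head ▸ src_mem_verts (List.mem_toFinset.mpr (hΓl (by simp))),
    hΓ₂.isWalk.src_head ▸ src_mem_verts (List.mem_toFinset.mpr (hΓl (by simp)))⟩

lemma nodup_cons_cons_append {v₁ v₂ : Q.V} (hne : v₁ ≠ v₂) {a₁ a₂ : Q.A}
    (ha₁ : Q.s a₁ = v₁ ∧ Q.t a₁ = v₂) (ha₂ : Q.s a₂ = v₂ ∧ Q.t a₂ = v₁) {Γ₁ Γ₂ : List Q.A}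
    (hΓ₁ : Q.IsPathFromTo Γ₁ v₁ v₂) (hΓ₂ : Q.IsPathFromTo Γ₂ v₂ v₁)
    (hΓ₁ne : Γ₁ ≠ [a₁]) (hΓ₂ne : Γ₂ ≠ [a₂]) (hΓ : Q.IsPrimCycle (Γ₁ ++ Γ₂)) :
    (a₁ :: a₂ :: (Γ₁ ++ Γ₂)).Nodup := by
  have h₁₂ : a₁ ≠ a₂ := fun h => hne (by rw [← ha₁.1, h, ha₂.1])
  have h₁Γ₁ : a₁ ∉ Γ₁ := fun h => hΓ₁ne (hΓ₁.eq_singleton_of_mem h ha₁.1 ha₁.2)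
  have h₁Γ₂ : a₁ ∉ Γ₂ := fun h => hΓ₂.src_ne_of_mem h ha₁.1
  have h₂Γ₁ : a₂ ∉ Γ₁ := fun h => hΓ₁.src_ne_of_mem h ha₂.1
  have h₂Γ₂ : a₂ ∉ Γ₂ := fun h => hΓ₂ne (hΓ₂.eq_singleton_of_mem h ha₂.1 ha₂.2)
  simp only [List.nodup_cons, List.mem_cons, List.mem_append, not_or]
  exact ⟨⟨h₁₂, h₁Γ₁, h₁Γ₂⟩, ⟨h₂Γ₁, h₂Γ₂⟩, hΓ.2.of_map⟩

/-- let `(v₁, v₂)` be a connected pair with arrows `a₁ : v₁ → v₂`,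
`a₂ : v₂ → v₁`, with exactly two directed paths each way, the extra paths `Γ₁`
(from `v₁` to `v₂`) and `Γ₂` (from `v₂` to `v₁`) being internally vertex-disjoint.
Then the only primitive cycles through both `v₁` and `v₂` are `p = (a₁, a₂)`,
`q₁ = (a₁, Γ₂)`, `q₂ = (Γ₁, a₂)` and `s = (Γ₁, Γ₂)`, and the multiset `U_q` of all
arrows of `q₁` and `q₂` has exactly the two partitions `{q₁, q₂}` and `{p, s}`. -/
theorem stmt_15 (Q : Quiv) (v₁ v₂ : Q.V) (hne : v₁ ≠ v₂)
    (a₁ a₂ : Q.A) (ha₁ : Q.s a₁ = v₁ ∧ Q.t a₁ = v₂) (ha₂ : Q.s a₂ = v₂ ∧ Q.t a₂ = v₁)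
    (Γ₁ Γ₂ : List Q.A)
    (hΓ₁ : Q.IsPathFromTo Γ₁ v₁ v₂) (hΓ₂ : Q.IsPathFromTo Γ₂ v₂ v₁)
    (hΓ₁ne : Γ₁ ≠ [a₁]) (hΓ₂ne : Γ₂ ≠ [a₂])
    (honly₁ : ∀ p : List Q.A, Q.IsPathFromTo p v₁ v₂ → p = [a₁] ∨ p = Γ₁)
    (honly₂ : ∀ p : List Q.A, Q.IsPathFromTo p v₂ v₁ → p = [a₂] ∨ p = Γ₂)
    (hdisj : ∀ v : Q.V, v ∈ Q.pathVerts Γ₁ → v ∈ Q.pathVerts Γ₂ → v = v₁ ∨ v = v₂) :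
    (∀ S ∈ Q.primCycles, v₁ ∈ Q.verts S → v₂ ∈ Q.verts S →
      S = {a₁, a₂} ∨ S = insert a₁ Γ₂.toFinset ∨ S = insert a₂ Γ₁.toFinset ∨
        S = Γ₁.toFinset ∪ Γ₂.toFinset) ∧
    ∀ P : Multiset (Finset Q.A),
      Q.IsCyclePartition ((a₁ ::ₘ (↑Γ₂ : Multiset Q.A)) + (a₂ ::ₘ (↑Γ₁ : Multiset Q.A))) P →
        P = ({insert a₁ Γ₂.toFinset, insert a₂ Γ₁.toFinset} : Multiset (Finset Q.A)) ∨
        P = ({({a₁, a₂} : Finset Q.A), Γ₁.toFinset ∪ Γ₂.toFinset} : Multiset (Finset Q.A)) := by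
  have hΓ : Q.IsPrimCycle (Γ₁ ++ Γ₂) := isPrimCycle_append hΓ₁ hΓ₂ hdisj
  refine ⟨fun S hS => eq_of_mem_primCycles_of_mem_verts hne honly₁ honly₂ hS,
    fun P ⟨hcyc, hsum⟩ => Multiset.eq_or_eq_of_sum_map_val_eq
      (nodup_cons_cons_append hne ha₁ ha₂ hΓ₁ hΓ₂ hΓ₁ne hΓ₂ne hΓ) hΓ₂.ne_nil (fun S hS => ?_) hsum⟩
  have hsub : S ⊆ insert a₁ (insert a₂ (Γ₁ ++ Γ₂).toFinset) := fun b hb => by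
    have : b ∈ (P.map Finset.val).sum :=
      Multiset.mem_of_le (Multiset.le_sum_of_mem (Multiset.mem_map_of_mem _ hS)) hb
    simp only [hsum, Multiset.mem_add, Multiset.mem_cons, Multiset.mem_coe] at this
    simp only [Finset.mem_insert, List.mem_toFinset, List.mem_append]
    tauto
  obtain ⟨h₁, h₂⟩ := mem_verts_of_mem_primCycles_of_subset ha₁ ha₂ hΓ₁ hΓ₂ hΓ (hcyc S hS) hsub
  exact eq_of_mem_primCycles_of_mem_verts hne honly₁ honly₂ (hcyc S hS) h₁ h₂

end Quiv
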